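/- arXiv:1802.00377 — 2 statements merged into one kernel-verified Lean document; each statement's English description precedes it below -/
import Mathlib

section
/- Let B ⊆ ℝⁿ be an open ball, T ⊆ B a relatively closed subset, and f : B → ℝ a continuous function such that f(x) = 0 for every x ∈ T, f is continuously differentiable on B ∖ T, and ∫_{B∖T} |Df| dx < ∞. Then for every index l ∈ {1,…,n} and every C¹ function ζ : ℝⁿ → ℝ with compact support contained in B, one has ∫_B f · ∂_l ζ dx = − ∫_{B∖T} (∂_l f) · ζ dx. In particular, the distributional l-th partial derivative of f on B is the L¹(B) function equal to ∂_l f on B ∖ T and to 0 on T. -/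
/-!
Flatten `f` near its zero set. `flatId` is smooth, vanishes on `[-1, 1]` and is the identity
outside `(-2, 2)`; `flatten ε v = ε * flatId (v / ε)`. Since `f` is continuous and vanishes on `T`,
`flatten ε ∘ f` vanishes on a neighbourhood of `T`, hence is differentiable on all of `B`, and
ordinary integration by parts gives `∫_B flatten ε (f) ∂_l ζ = - ∫_{B∖T} flatId' (f / ε) ∂_l f ζ`.
As `ε → 0`, `flatten ε (f) → f` with `|flatten ε (f)| ≤ |f|`, and `flatId' (f / ε) → 1` where
`f ≠ 0`, while `Df = 0` a.e. on `{f = 0}`; dominated convergence on both sides concludes.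
-/

open MeasureTheory Metric Set

noncomputable section

abbrev En (n : ℕ) := EuclideanSpace ℝ (Fin n)

/-- The `i`-th partial derivative of `f`. -/
def pd {n : ℕ} (f : En n → ℝ) (i : Fin n) (x : En n) : ℝ :=
  fderiv ℝ f x (EuclideanSpace.single i 1)

open Filter Topology

def unitBump : ContDiffBump (0 : ℝ) := ⟨1, 2, one_pos, one_lt_two⟩

def flatId (t : ℝ) : ℝ := t * (1 - unitBump t)

lemma contDiff_flatId : ContDiff ℝ 1 flatId :=
  contDiff_id.mul (contDiff_const.sub unitBump.contDiff)

lemma flatId_eq_zero {t : ℝ} (ht : |t| ≤ 1) : flatId t = 0 := by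
  rw [flatId, unitBump.one_of_mem_closedBall (by simpa [unitBump] using ht), sub_self, mul_zero]

lemma flatId_eq_self {t : ℝ} (ht : 2 ≤ |t|) : flatId t = t := by
  rw [flatId, unitBump.zero_of_le_dist (by simpa [unitBump] using ht), sub_zero, mul_one]

lemma abs_flatId_le (t : ℝ) : |flatId t| ≤ |t| := by
  rw [flatId, abs_mul, abs_of_nonneg (sub_nonneg.2 unitBump.le_one)]
  exact mul_le_of_le_one_right (abs_nonneg t) (sub_le_self _ unitBump.nonneg)

lemma deriv_flatId_eq_zero {t : ℝ} (ht : |t| < 1) : deriv flatId t = 0 := by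
  have : flatId =ᶠ[𝓝 t] fun _ => 0 := by
    filter_upwards [(isOpen_lt continuous_abs continuous_const).mem_nhds ht] with s hs
    exact flatId_eq_zero (le_of_lt hs)
  rw [this.deriv_eq, deriv_const]

lemma deriv_flatId_eq_one {t : ℝ} (ht : 2 < |t|) : deriv flatId t = 1 := by
  have : flatId =ᶠ[𝓝 t] id := by
    filter_upwards [(isOpen_lt continuous_const continuous_abs).mem_nhds ht] with s hs
    exact flatId_eq_self (le_of_lt hs)
  rw [this.deriv_eq, deriv_id]

lemma exists_abs_deriv_flatId_le : ∃ M, ∀ t, |deriv flatId t| ≤ M := by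
  have hcont : Continuous (deriv flatId) := contDiff_flatId.continuous_deriv le_rfl
  obtain ⟨M, hM⟩ := IsCompact.exists_bound_of_continuousOn (isCompact_closedBall (0 : ℝ) 2)
    hcont.continuousOn
  refine ⟨max M 1, fun t => ?_⟩
  rcases le_or_gt |t| 2 with ht | ht
  · exact (hM t (by simpa using ht)).trans (le_max_left _ _)
  · rw [deriv_flatId_eq_one ht, abs_one]; exact le_max_right _ _

def flatten (ε v : ℝ) : ℝ := ε * flatId (v / ε)

lemma hasDerivAt_flatten {ε : ℝ} (hε : ε ≠ 0) (v : ℝ) :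
    HasDerivAt (flatten ε) (deriv flatId (v / ε)) v := by
  have h := ((contDiff_flatId.differentiable one_ne_zero (v / ε)).hasDerivAt.comp v
    ((hasDerivAt_id v).div_const ε)).const_mul ε
  rwa [mul_left_comm, mul_one_div_cancel hε, mul_one] at h

lemma flatten_eq_zero {ε v : ℝ} (hε : 0 < ε) (hv : |v| ≤ ε) : flatten ε v = 0 := by
  rw [flatten, flatId_eq_zero, mul_zero]
  rwa [abs_div, abs_of_pos hε, div_le_one hε]

lemma abs_flatten_le {ε : ℝ} (hε : 0 < ε) (v : ℝ) : |flatten ε v| ≤ |v| := by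
  rw [flatten, abs_mul, abs_of_pos hε]
  calc ε * |flatId (v / ε)| ≤ ε * |v / ε| := mul_le_mul_of_nonneg_left (abs_flatId_le _) hε.le
    _ = |v| := by rw [abs_div, abs_of_pos hε]; field_simp

lemma eventually_two_lt_abs_div {v : ℝ} (hv : v ≠ 0) : ∀ᶠ ε in 𝓝[>] 0, 2 < |v / ε| := by
  filter_upwards [Ioo_mem_nhdsGT (half_pos (abs_pos.2 hv))] with ε ⟨hε, hεv⟩
  rw [abs_div, abs_of_pos hε, lt_div_iff₀ hε]
  linarith

lemma tendsto_flatten (v : ℝ) : Tendsto (fun ε => flatten ε v) (𝓝[>] 0) (𝓝 v) := by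
  rcases eq_or_ne v 0 with rfl | hv
  · simp [flatten, flatId]
  refine tendsto_const_nhds.congr' ?_
  filter_upwards [eventually_two_lt_abs_div hv, self_mem_nhdsWithin] with ε hε (hε0 : 0 < ε)
  rw [flatten, flatId_eq_self hε.le]
  field_simp

lemma tendsto_deriv_flatId_div {v : ℝ} (hv : v ≠ 0) :
    Tendsto (fun ε => deriv flatId (v / ε)) (𝓝[>] 0) (𝓝 1) :=
  tendsto_const_nhds.congr' <| (eventually_two_lt_abs_div hv).mono
    fun _ hε => (deriv_flatId_eq_one hε).symm

section

variable {X : Type*} [TopologicalSpace X] [MeasurableSpace X] [OpensMeasurableSpace X]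
  {μ : Measure X} [IsFiniteMeasureOnCompacts μ]

lemma integrable_mul_of_tsupport_subset {U : Set X} (hU : IsOpen U) {u w : X → ℝ}
    (hu : ContinuousOn u U) (hw : Continuous w) (hwc : HasCompactSupport w)
    (hwU : tsupport w ⊆ U) : Integrable (fun x => u x * w x) μ :=
  ((hu.mul hw.continuousOn).continuous_of_tsupport_subset hU
    ((tsupport_mul_subset_right).trans hwU)).integrable_of_hasCompactSupport hwc.mul_left

theorem tendsto_setIntegral_flatten_comp_mul {U : Set X} (hU : IsOpen U) {f w : X → ℝ}
    (hfc : ContinuousOn f U) (hw : Continuous w) (hwc : HasCompactSupport w)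
    (hwU : tsupport w ⊆ U) :
    Tendsto (fun ε => ∫ x in U, flatten ε (f x) * w x ∂μ) (𝓝[>] 0)
      (𝓝 (∫ x in U, f x * w x ∂μ)) := by
  refine tendsto_integral_filter_of_dominated_convergence (fun x => ‖f x * w x‖) ?_ ?_
    (integrable_mul_of_tsupport_subset hU hfc hw hwc hwU).norm.integrableOn
    (Eventually.of_forall fun x => (tendsto_flatten (f x)).mul_const (w x))
  · exact Eventually.of_forall fun ε =>
      ((((contDiff_flatId.continuous.comp (continuous_id.div_const ε)).const_mul ε)
        |>.comp_continuousOn hfc).aestronglyMeasurable hU.measurableSet).mul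
        hw.aestronglyMeasurable
  · filter_upwards [self_mem_nhdsWithin] with ε (hε : 0 < ε)
    refine Eventually.of_forall fun x => ?_
    simp only [norm_mul, Real.norm_eq_abs]
    exact mul_le_mul_of_nonneg_right (abs_flatten_le hε _) (abs_nonneg _)

end

lemma indicator_compl_eqOn_indicator_diff {α β : Type*} [Zero β] (U T : Set α) (g : α → β) :
    EqOn (Tᶜ.indicator g) ((U \ T).indicator g) U := fun x hx => by
  by_cases hxT : x ∈ T <;> simp [hx, hxT]

lemma setIntegral_indicator_compl_mul {α : Type*} [MeasurableSpace α] {μ : Measure α}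
    {U T : Set α} (hU : MeasurableSet U) (hUT : MeasurableSet (U \ T)) (g h : α → ℝ) :
    ∫ x in U, Tᶜ.indicator g x * h x ∂μ = ∫ x in U \ T, g x * h x ∂μ := by
  rw [setIntegral_congr_fun hU fun x hx => by
    rw [indicator_compl_eqOn_indicator_diff U T g hx, ← indicator_mul_left],
    setIntegral_indicator hUT, inter_eq_right.2 sdiff_subset]

section

variable {E : Type*} [NormedAddCommGroup E] [NormedSpace ℝ E]

theorem hasFDerivAt_flatten_comp {U T : Set E} (hU : IsOpen U) (hUT : IsOpen (U \ T))
    {f : E → ℝ} (hfc : ContinuousOn f U) (hfT : ∀ x ∈ T, f x = 0)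
    (hfd : DifferentiableOn ℝ f (U \ T)) {ε : ℝ} (hε : 0 < ε) {x : E} (hx : x ∈ U) :
    HasFDerivAt (fun y => flatten ε (f y)) (deriv flatId (f x / ε) • fderiv ℝ f x) x := by
  by_cases hxT : x ∈ T
  · have hflat : (fun y => flatten ε (f y)) =ᶠ[𝓝 x] fun _ => 0 := by
      have hfx : Tendsto f (𝓝 x) (𝓝 0) := hfT x hxT ▸ hfc.continuousAt (hU.mem_nhds hx)
      filter_upwards [hfx.eventually (Ioo_mem_nhds (neg_neg_iff_pos.2 hε) hε)] with y hy
      exact flatten_eq_zero hε (abs_le.2 ⟨hy.1.le, hy.2.le⟩)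
    rw [hfT x hxT, zero_div, deriv_flatId_eq_zero (by simp), zero_smul]
    exact (hasFDerivAt_const 0 x).congr_of_eventuallyEq hflat
  · have hxUT : x ∈ U \ T := ⟨hx, hxT⟩
    exact (hasDerivAt_flatten hε.ne' (f x)).comp_hasFDerivAt x
      ((hfd x hxUT).differentiableAt (hUT.mem_nhds hxUT)).hasFDerivAt

lemma norm_mul_apply_mul_le (L : E →L[ℝ] ℝ) (v : E) {a z M C : ℝ} (ha : |a| ≤ M)
    (hz : |z| ≤ C) : ‖a * L v * z‖ ≤ M * ‖v‖ * C * ‖L‖ := by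
  have hM : 0 ≤ M := (abs_nonneg a).trans ha
  rw [norm_mul, norm_mul, Real.norm_eq_abs, Real.norm_eq_abs]
  calc |a| * ‖L v‖ * |z| ≤ M * (‖L‖ * ‖v‖) * C := by
        gcongr
        exact L.le_opNorm v
    _ = M * ‖v‖ * C * ‖L‖ := by ring

variable [MeasurableSpace E] [BorelSpace E] {μ : Measure E}

lemma integrableOn_mul_fderiv_apply_mul {s : Set E} (hs : MeasurableSet s) {f a ζ : E → ℝ}
    {M : ℝ} (hint : IntegrableOn (fun x => ‖fderiv ℝ f x‖) s μ) (ha : ContinuousOn a s)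
    (haM : ∀ x, |a x| ≤ M) (hζ : Continuous ζ) (hζc : HasCompactSupport ζ) (v : E) :
    IntegrableOn (fun x => a x * fderiv ℝ f x v * ζ x) s μ := by
  obtain ⟨C, hC⟩ := hζ.bounded_above_of_compact_support hζc
  refine (hint.const_mul (M * ‖v‖ * C)).mono' ?_ (Eventually.of_forall fun x =>
    norm_mul_apply_mul_le _ v (haM x) (by simpa using hC x))
  exact ((ha.aestronglyMeasurable hs).mul
    (measurable_fderiv_apply_const ℝ f v).aestronglyMeasurable).mul hζ.aestronglyMeasurable

lemma integrableOn_indicator_compl_fderiv_apply {U T : Set E} (hU : MeasurableSet U)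
    (hUT : MeasurableSet (U \ T)) {f : E → ℝ}
    (hint : IntegrableOn (fun x => ‖fderiv ℝ f x‖) (U \ T) μ) (v : E) :
    IntegrableOn (Tᶜ.indicator fun x => fderiv ℝ f x v) U μ := by
  have h : IntegrableOn (fun x => fderiv ℝ f x v) (U \ T) μ :=
    (hint.mul_const ‖v‖).mono' (measurable_fderiv_apply_const ℝ f v).aestronglyMeasurable
      (Eventually.of_forall fun x => (fderiv ℝ f x).le_opNorm v)
  exact (h.integrable_indicator hUT).integrableOn.congr_fun
    (indicator_compl_eqOn_indicator_diff U T _).symm hU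

variable [FiniteDimensional ℝ E] [μ.IsAddHaarMeasure]

theorem ae_fderiv_eq_zero_of_eq_zero {s : Set E} (hs : MeasurableSet s) {f : E → ℝ}
    (hf : ∀ x ∈ s, DifferentiableAt ℝ f x) (hs0 : ∀ x ∈ s, f x = 0) :
    ∀ᵐ x ∂μ.restrict s, fderiv ℝ f x = 0 := by
  rcases subsingleton_or_nontrivial E with hE | hE
  · exact Eventually.of_forall fun x => Subsingleton.elim _ _
  obtain ⟨e, he⟩ := exists_ne (0 : E)
  -- `x ↦ f x • e` is approximated by `0` on `s` with constant `0`, so its derivative, hence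
  -- that of `f`, vanishes at a.e. point of `s`.
  have happrox : ApproximatesLinearOn (fun x => f x • e) (0 : E →L[ℝ] E) s 0 := by
    intro x hx y hy
    simp [hs0 x hx, hs0 y hy]
  filter_upwards [happrox.norm_fderiv_sub_le μ hs (fun x => (fderiv ℝ f x).smulRight e)
    fun x hx => ((hf x hx).hasFDerivAt.smul_const e).hasFDerivWithinAt] with x hx
  rw [sub_zero, nonpos_iff_eq_zero, nnnorm_eq_zero] at hx
  ext v
  simpa [he] using congr($hx v)

theorem integral_flatten_comp_mul_fderiv {U T : Set E} (hU : IsOpen U) (hUT : IsOpen (U \ T))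
    {f : E → ℝ} (hfc : ContinuousOn f U) (hfT : ∀ x ∈ T, f x = 0)
    (hfd : DifferentiableOn ℝ f (U \ T))
    (hint : IntegrableOn (fun x => ‖fderiv ℝ f x‖) (U \ T) μ)
    {ζ : E → ℝ} (hζ : ContDiff ℝ 1 ζ) (hζc : HasCompactSupport ζ) (hζU : tsupport ζ ⊆ U)
    (v : E) {ε : ℝ} (hε : 0 < ε) :
    ∫ x in U, flatten ε (f x) * fderiv ℝ ζ x v ∂μ
      = - ∫ x in U \ T, deriv flatId (f x / ε) * fderiv ℝ f x v * ζ x ∂μ := by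
  set u' : E → E →L[ℝ] ℝ := fun x => deriv flatId (f x / ε) • fderiv ℝ f x
  have hu : ∀ x ∈ U, HasFDerivAt (fun y => flatten ε (f y)) (u' x) x :=
    fun x hx => hasFDerivAt_flatten_comp hU hUT hfc hfT hfd hε hx
  have hucont : ContinuousOn (fun y => flatten ε (f y)) U :=
    fun x hx => (hu x hx).continuousAt.continuousWithinAt
  have hζ'cont : Continuous fun x => fderiv ℝ ζ x v :=
    (hζ.continuous_fderiv one_ne_zero).clm_apply continuous_const
  have hζ'U : tsupport (fun x => fderiv ℝ ζ x v) ⊆ U :=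
    (tsupport_fderiv_apply_subset ℝ v).trans hζU
  -- on `U ∩ T` the factor `deriv flatId 0` vanishes, outside `U` the factor `ζ x` does
  have hu'ζ : (fun x => u' x v * ζ x)
      = (U \ T).indicator fun x => deriv flatId (f x / ε) * fderiv ℝ f x v * ζ x := by
    ext x
    by_cases hxUT : x ∈ U \ T
    · simp [u', indicator_of_mem hxUT, mul_assoc]
    rw [indicator_of_notMem hxUT]
    by_cases hxU : x ∈ U
    · have hxT : x ∈ T := by_contra fun h => hxUT ⟨hxU, h⟩
      simp [u', hfT x hxT, deriv_flatId_eq_zero]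
    · simp [image_eq_zero_of_notMem_tsupport fun h => hxU (hζU h)]
  obtain ⟨M, hM⟩ := exists_abs_deriv_flatId_le
  have hint' := integrableOn_mul_fderiv_apply_mul hUT.measurableSet hint
    (((contDiff_flatId.continuous_deriv le_rfl).comp_continuousOn
      (hfd.continuousOn.div_const ε))) (fun x => hM _) hζ.continuous hζc v
  have hibp := integral_bilinear_hasFDerivAt_right_eq_neg_left_of_integrable
    (μ := μ) (B := ContinuousLinearMap.mul ℝ ℝ) (v := v) (f' := u') (g' := fderiv ℝ ζ)
    (by simpa [hu'ζ] using hint'.integrable_indicator hUT.measurableSet)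
    (integrable_mul_of_tsupport_subset hU hucont hζ'cont (hζc.fderiv_apply (𝕜 := ℝ) v) hζ'U)
    (integrable_mul_of_tsupport_subset hU hucont hζ.continuous hζc hζU)
    (fun x hx => hu x (hζU hx))
    (fun x _ => (hζ.differentiable one_ne_zero x).hasFDerivAt)
  simp only [ContinuousLinearMap.mul_apply'] at hibp
  rw [setIntegral_eq_integral_of_forall_compl_eq_zero fun x hx => by
    simp [image_eq_zero_of_notMem_tsupport (hζ'U.mt hx)]]
  rw [hibp, hu'ζ, integral_indicator hUT.measurableSet]

theorem tendsto_setIntegral_deriv_flatId_mul {s : Set E} (hs : IsOpen s) {f ζ : E → ℝ}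
    (hfd : DifferentiableOn ℝ f s) (hint : IntegrableOn (fun x => ‖fderiv ℝ f x‖) s μ)
    (hζ : Continuous ζ) (hζc : HasCompactSupport ζ) (v : E) :
    Tendsto (fun ε => ∫ x in s, deriv flatId (f x / ε) * fderiv ℝ f x v * ζ x ∂μ) (𝓝[>] 0)
      (𝓝 (∫ x in s, fderiv ℝ f x v * ζ x ∂μ)) := by
  obtain ⟨M, hM⟩ := exists_abs_deriv_flatId_le
  obtain ⟨C, hC⟩ := hζ.bounded_above_of_compact_support hζc
  -- the zero set of `f` in `s`, measurable as the complement in `s` of a relatively open set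
  have hz : MeasurableSet (s \ (s ∩ f ⁻¹' {0}ᶜ)) :=
    hs.measurableSet.diff (hfd.continuousOn.isOpen_inter_preimage hs isOpen_compl_singleton
      |>.measurableSet)
  have hlevel : ∀ᵐ x ∂μ.restrict s, f x = 0 → fderiv ℝ f x = 0 := by
    have h := ae_fderiv_eq_zero_of_eq_zero (μ := μ) hz
      (fun x hx => (hfd x hx.1).differentiableAt (hs.mem_nhds hx.1))
      (fun x hx => by_contra fun h => hx.2 ⟨hx.1, h⟩)
    rw [ae_restrict_iff' hz] at h
    filter_upwards [ae_restrict_of_ae h, ae_restrict_mem hs.measurableSet] with x hx hxs hfx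
    exact hx ⟨hxs, fun h => h.2 hfx⟩
  refine tendsto_integral_filter_of_dominated_convergence
    (fun x => M * ‖v‖ * C * ‖fderiv ℝ f x‖) (Eventually.of_forall fun ε => ?_)
    (Eventually.of_forall fun ε => Eventually.of_forall fun x =>
      norm_mul_apply_mul_le _ v (hM _) (by simpa using hC x))
    (hint.const_mul _) ?_
  · exact (integrableOn_mul_fderiv_apply_mul hs.measurableSet hint
      ((contDiff_flatId.continuous_deriv le_rfl).comp_continuousOn
        (hfd.continuousOn.div_const ε)) (fun x => hM _) hζ hζc v).aestronglyMeasurable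
  · filter_upwards [hlevel] with x hx
    by_cases hfx : f x = 0
    · simp [hx hfx]
    · simpa using ((tendsto_deriv_flatId_div hfx).mul_const (fderiv ℝ f x v)).mul_const (ζ x)

theorem setIntegral_mul_fderiv_eq_neg_setIntegral_diff {U T : Set E} (hU : IsOpen U)
    (hUT : IsOpen (U \ T)) {f : E → ℝ} (hfc : ContinuousOn f U) (hfT : ∀ x ∈ T, f x = 0)
    (hfd : DifferentiableOn ℝ f (U \ T))
    (hint : IntegrableOn (fun x => ‖fderiv ℝ f x‖) (U \ T) μ)
    {ζ : E → ℝ} (hζ : ContDiff ℝ 1 ζ) (hζc : HasCompactSupport ζ) (hζU : tsupport ζ ⊆ U)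
    (v : E) :
    ∫ x in U, f x * fderiv ℝ ζ x v ∂μ = - ∫ x in U \ T, fderiv ℝ f x v * ζ x ∂μ := by
  have hlhs := tendsto_setIntegral_flatten_comp_mul (μ := μ) hU hfc
    ((hζ.continuous_fderiv one_ne_zero).clm_apply continuous_const)
    (hζc.fderiv_apply (𝕜 := ℝ) v)
    ((tsupport_fderiv_apply_subset ℝ v).trans hζU)
  have hrhs := tendsto_setIntegral_deriv_flatId_mul (μ := μ) hUT hfd hint hζ.continuous hζc v
  refine tendsto_nhds_unique (hlhs.congr' ?_) hrhs.neg
  filter_upwards [self_mem_nhdsWithin] with ε (hε : 0 < ε)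
  exact integral_flatten_comp_mul_fderiv hU hUT hfc hfT hfd hint hζ hζc hζU v hε

end

theorem distributional_derivative_extension_general
    {n : ℕ} (c : En n) (r : ℝ)
    (B : Set (En n)) (hB : B = Metric.ball c r)
    (T : Set (En n)) (hTrc : IsOpen (B \ T))
    (f : En n → ℝ)
    (hfc : ContinuousOn f B)
    (hfT : ∀ x ∈ T, f x = 0)
    (hfC1 : ContDiffOn ℝ 1 f (B \ T))
    (hint : IntegrableOn (fun x => ‖fderiv ℝ f x‖) (B \ T) volume) :
    ∀ l : Fin n,
      IntegrableOn (Set.indicator Tᶜ (fun x => pd f l x)) B volume ∧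
      ∀ ζ : En n → ℝ, ContDiff ℝ 1 ζ → HasCompactSupport ζ → tsupport ζ ⊆ B →
        (∫ x in B, f x * pd ζ l x) = - ∫ x in B \ T, pd f l x * ζ x ∧
        (∫ x in B, f x * pd ζ l x)
          = - ∫ x in B, Set.indicator Tᶜ (fun y => pd f l y) x * ζ x := by
  intro l
  have hBo : IsOpen B := hB ▸ isOpen_ball
  refine ⟨integrableOn_indicator_compl_fderiv_apply hBo.measurableSet hTrc.measurableSet hint _,
    fun ζ hζ hζc hζB => ?_⟩
  have key := setIntegral_mul_fderiv_eq_neg_setIntegral_diff hBo hTrc hfc hfT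
    (hfC1.differentiableOn one_ne_zero) hint hζ hζc hζB (EuclideanSpace.single l 1)
  exact ⟨key, key.trans (congrArg Neg.neg
    (setIntegral_indicator_compl_mul hBo.measurableSet hTrc.measurableSet _ _).symm)⟩

/-- **Extension lemma for distributional derivatives** (Lemma D.1 of the paper).
If `f` is continuous on an open ball `B`, vanishes on a relatively closed subset `T ⊆ B`,
is `C¹` on `B \ T` with `∫_{B \ T} |Df| < ∞`, then for every index `l` and every `C¹`
test function `ζ` compactly supported in `B` one has
`∫_B f ∂_l ζ = - ∫_{B \ T} (∂_l f) ζ`; in particular the distributional `l`-th partial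
derivative of `f` on `B` is the `L¹(B)` function equal to `∂_l f` on `B \ T` and `0` on `T`. -/
theorem distributional_derivative_extension
    {n : ℕ} (c : En n) (r : ℝ) (hr : 0 < r)
    (B : Set (En n)) (hB : B = Metric.ball c r)
    (T : Set (En n)) (hTB : T ⊆ B) (hTrc : IsOpen (B \ T))
    (f : En n → ℝ)
    (hfc : ContinuousOn f B)
    (hfT : ∀ x ∈ T, f x = 0)
    (hfC1 : ContDiffOn ℝ 1 f (B \ T))
    (hint : IntegrableOn (fun x => ‖fderiv ℝ f x‖) (B \ T) volume) :
    ∀ l : Fin n,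
      IntegrableOn (Set.indicator Tᶜ (fun x => pd f l x)) B volume ∧
      ∀ ζ : En n → ℝ, ContDiff ℝ 1 ζ → HasCompactSupport ζ → tsupport ζ ⊆ B →
        (∫ x in B, f x * pd ζ l x) = - ∫ x in B \ T, pd f l x * ζ x ∧
        (∫ x in B, f x * pd ζ l x)
          = - ∫ x in B, Set.indicator Tᶜ (fun y => pd f l y) x * ζ x :=
  distributional_derivative_extension_general c r B hB T hTrc f hfc hfT hfC1 hint

end
end

section
/- Let Ω ⊆ ℝⁿ be open, h > 0, and u₁, u₂ ∈ C²(Ω) with u₁ ≤ u₂ on Ω, satisfying pointwise div(F(Du₁)) = −h and div(F(Du₂)) = h on Ω, where F(p) = p/√(1+|p|²). Suppose u₁(x₀) = u₂(x₀) for some x₀ ∈ Ω. Then: (i) Du₁(x₀) = Du₂(x₀); (ii) the Hessian D²(u₂−u₁)(x₀) is positive semidefinite and nonzero, and there exists i ∈ {1,…,n} with ∂²_{ii}(u₂−u₁)(x₀) > 0; (iii) consequently there exist an index i and an open neighborhood U of x₀ such that ∂²_{ii}(u₂−u₁) > 0 on U, the contact set {x ∈ U : u₁(x) = u₂(x)}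 is contained in {x ∈ U : ∂_i(u₂−u₁)(x) = 0}, and {x ∈ U : u₁(x) = u₂(x)} has Lebesgue measure zero. -/
open MeasureTheory Metric Set

noncomputable section

/-- The second partial derivative `∂_i ∂_j f`. -/
def pd2 {n : ℕ} (f : En n → ℝ) (i j : Fin n) (x : En n) : ℝ :=
  fderiv ℝ (fun y => pd f j y) x (EuclideanSpace.single i 1)

/-- `|Du|²`, the squared length of the gradient of `u`. -/
def gradSq {n : ℕ} (u : En n → ℝ) (x : En n) : ℝ := ∑ i, pd u i x ^ 2

/-- The `i`-th component of `F(Du)` where `F(p) = p/√(1+|p|²)`. -/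
def Fcomp {n : ℕ} (u : En n → ℝ) (i : Fin n) (x : En n) : ℝ :=
  pd u i x / Real.sqrt (1 + gradSq u x)

/-- The mean curvature operator `div (F(Du))`. -/
def divF {n : ℕ} (u : En n → ℝ) (x : En n) : ℝ :=
  ∑ i, fderiv ℝ (Fcomp u i) x (EuclideanSpace.single i 1)

/-!
Put `w = u₂ - u₁`. It is nonnegative on `Ω` and vanishes at `x₀`, so `x₀` is a local
minimum: `Dw(x₀) = 0` and `D²w(x₀) ≥ 0`. Expanding the mean curvature operator as
`div F(Du) = Δu / s - ⟨D²u · p, p⟩ / s³` with `p = Du` and `s = √(1 + |p|²)`, and using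
that `p` and `s` agree for `u₁` and `u₂` at `x₀`, the difference of the two equations
reads `2h = Δw / s - ⟨D²w · p, p⟩ / s³`; hence `Δw(x₀) ≥ 2hs > 0` and some
`∂ᵢᵢw(x₀) > 0`. On a ball around `x₀` where `∂ᵢᵢw > 0`, the function `∂ᵢw` is strictly
increasing along each line in the direction `eᵢ`. So its zero set, which contains every
contact point (each is a minimum of `w`), meets such a line at most once and is null by
Fubini.
-/

open Filter Topology

theorem hasDerivAt_add_smul {E : Type*} [NormedAddCommGroup E] [NormedSpace ℝ E] (x v : E)
    (t : ℝ) : HasDerivAt (fun t : ℝ => x + t • v) v t := by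
  have h := ((hasDerivAt_id t).smul_const v).const_add x
  rwa [one_smul] at h

theorem IsLocalMin.deriv_deriv_nonneg {g : ℝ → ℝ} {a : ℝ} (hmin : IsLocalMin g a)
    (hg : ContinuousAt g a) : 0 ≤ deriv (deriv g) a := by
  by_contra! hneg
  -- by the second derivative test `a` is then also a local maximum, so `g` is locally constant
  have hmax : IsLocalMax g a := isLocalMax_of_deriv_deriv_neg hneg hmin.deriv_eq_zero hg
  have hconst : g =ᶠ[𝓝 a] fun _ => g a := (hmin.and hmax).mono fun y hy => le_antisymm hy.2 hy.1
  have hderiv : deriv g =ᶠ[𝓝 a] fun _ => 0 :=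
    hconst.eventuallyEq_nhds.mono fun y hy => by rw [hy.deriv_eq, deriv_const]
  rw [hderiv.deriv_eq, deriv_const] at hneg
  exact hneg.false

theorem IsLocalMin.fderiv_fderiv_apply_nonneg {E : Type*} [NormedAddCommGroup E]
    [NormedSpace ℝ E] {w : E → ℝ} {x : E} (hmin : IsLocalMin w x) (hw : ContDiffAt ℝ 2 w x)
    (v : E) : 0 ≤ fderiv ℝ (fderiv ℝ w) x v v := by
  set γ : ℝ → E := fun t => x + t • v
  have hγ : ∀ t, HasDerivAt γ v t := hasDerivAt_add_smul x v
  have hγ0 : γ 0 = x := by simp [γ]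
  rw [← hγ0] at hmin hw ⊢
  have hdiff : ∀ᶠ t in 𝓝 (0 : ℝ), DifferentiableAt ℝ w (γ t) :=
    (hγ 0).continuousAt.eventually
      ((hw.eventually (by simp)).mono fun y hy => hy.differentiableAt (by simp))
  have hderiv : deriv (w ∘ γ) =ᶠ[𝓝 0] fun t => fderiv ℝ w (γ t) v :=
    hdiff.mono fun t ht => (ht.hasFDerivAt.comp_hasDerivAt t (hγ t)).deriv
  have hD2 : HasFDerivAt (fderiv ℝ w) (fderiv ℝ (fderiv ℝ w) (γ 0)) (γ 0) :=
    ((hw.fderiv_right (m := 1) le_rfl).differentiableAt one_ne_zero).hasFDerivAt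
  have hsecond : HasDerivAt (fun t => fderiv ℝ w (γ t) v) (fderiv ℝ (fderiv ℝ w) (γ 0) v v) 0 :=
    (ContinuousLinearMap.apply ℝ ℝ v).hasFDerivAt.comp_hasDerivAt 0
      (hD2.comp_hasDerivAt 0 (hγ 0))
  have := (hmin.comp_continuous (hγ 0).continuousAt).deriv_deriv_nonneg
    (hw.continuousAt.comp (hγ 0).continuousAt)
  rwa [hderiv.deriv_eq, hsecond.deriv] at this

theorem strictMonoOn_comp_add_smul {E : Type*} [NormedAddCommGroup E] [NormedSpace ℝ E]
    {φ : E → ℝ} {U : Set E} (hU : Convex ℝ U) (x v : E)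
    (hφ : ∀ y ∈ U, DifferentiableAt ℝ φ y) (hpos : ∀ y ∈ U, 0 < fderiv ℝ φ y v) :
    StrictMonoOn (fun t : ℝ => φ (x + t • v)) {t | x + t • v ∈ U} := by
  have hderiv : ∀ t ∈ {t : ℝ | x + t • v ∈ U},
      HasDerivAt (fun t : ℝ => φ (x + t • v)) (fderiv ℝ φ (x + t • v) v) t := fun t ht =>
    (hφ _ ht).hasFDerivAt.comp_hasDerivAt t (hasDerivAt_add_smul x v t)
  have hconv : Convex ℝ {t : ℝ | x + t • v ∈ U} := by
    have hpre : {t : ℝ | x + t • v ∈ U} = AffineMap.lineMap x (x + v) ⁻¹' U := by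
      ext t
      simp [AffineMap.lineMap_apply, add_comm]
    exact hpre ▸ hU.affine_preimage _
  refine strictMonoOn_of_deriv_pos hconv
    (fun t ht => (hderiv t ht).continuousAt.continuousWithinAt) fun t ht => ?_
  have ht := interior_subset ht
  rw [(hderiv t ht).deriv]
  exact hpos _ ht

theorem volume_eq_zero_of_forall_add_single_mem {ι : Type*} [Fintype ι] [DecidableEq ι]
    {Z : Set (ι → ℝ)} (hZ : MeasurableSet Z) (i : ι)
    (hline : ∀ x ∈ Z, ∀ t : ℝ, x + Pi.single i t ∈ Z → t = 0) : volume Z = 0 := by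
  set e := MeasurableEquiv.piEquivPiSubtypeProd (fun _ : ι => ℝ) (· ≠ i)
  have he : MeasurePreserving e.symm := (volume_preserving_piEquivPiSubtypeProd _ _).symm e
  -- Fubini over the splitting of the coordinates into `j ≠ i` and `j = i`
  rw [← he.measure_preimage hZ.nullMeasurableSet, Measure.volume_eq_prod,
    Measure.measure_prod_null (e.symm.measurable hZ)]
  have : Nonempty {j // ¬ j ≠ i} := ⟨⟨i, not_not.2 rfl⟩⟩
  refine ae_of_all _ fun a => Set.Subsingleton.measure_zero ?_ _
  intro b₁ hb₁ b₂ hb₂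
  set i' : {j // ¬ j ≠ i} := ⟨i, not_not.2 rfl⟩
  have hshift : e.symm (a, b₂) = e.symm (a, b₁) + Pi.single i (b₂ i' - b₁ i') := by
    funext j
    by_cases hj : j = i
    · subst hj
      simp [e, MeasurableEquiv.piEquivPiSubtypeProd, i']
    · simp [e, MeasurableEquiv.piEquivPiSubtypeProd, hj]
  have hi' : b₂ i' = b₁ i' := sub_eq_zero.1 (hline _ hb₁ _ (hshift ▸ hb₂))
  funext ⟨k, hk⟩
  obtain rfl : k = i := not_not.1 hk
  exact hi'.symm

theorem EuclideanSpace.volume_eq_zero_of_forall_add_smul_single_mem {ι : Type*} [Fintype ι]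
    [DecidableEq ι] {Z : Set (EuclideanSpace ℝ ι)} (hZ : MeasurableSet Z) (i : ι)
    (hline : ∀ x ∈ Z, ∀ t : ℝ, x + t • EuclideanSpace.single i 1 ∈ Z → t = 0) :
    volume Z = 0 := by
  have hP := PiLp.volume_preserving_toLp ι
  rw [← hP.measure_preimage hZ.nullMeasurableSet]
  refine volume_eq_zero_of_forall_add_single_mem (hP.measurable hZ) i fun x hx t hxt => ?_
  have hshift :
      WithLp.toLp 2 x + t • EuclideanSpace.single i 1 = WithLp.toLp 2 (x + Pi.single i t) := by
    ext j
    by_cases hj : j = i <;> simp [hj]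
  exact hline _ hx t (hshift ▸ hxt)

theorem Convex.volume_sep_eq_zero_of_fderiv_apply_single_pos {ι : Type*} [Fintype ι]
    [DecidableEq ι] {U : Set (EuclideanSpace ℝ ι)} (hU : Convex ℝ U) (hUo : IsOpen U) (i : ι)
    {φ : EuclideanSpace ℝ ι → ℝ} (hφ : ∀ y ∈ U, DifferentiableAt ℝ φ y)
    (hpos : ∀ y ∈ U, 0 < fderiv ℝ φ y (EuclideanSpace.single i 1)) :
    volume {x ∈ U | φ x = 0} = 0 := by
  have hmeas : MeasurableSet {x ∈ U | φ x = 0} := by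
    have hopen : IsOpen (U ∩ φ ⁻¹' {0}ᶜ) :=
      ContinuousOn.isOpen_inter_preimage (fun y hy => (hφ y hy).continuousAt.continuousWithinAt)
        hUo isClosed_singleton.isOpen_compl
    convert hUo.measurableSet.diff hopen.measurableSet using 1
    ext x
    simp
  refine EuclideanSpace.volume_eq_zero_of_forall_add_smul_single_mem hmeas i fun x hx t hxt => ?_
  refine ((strictMonoOn_comp_add_smul hU x _ hφ hpos).injOn ?_ hxt.1 ?_).symm
  · simpa using hx.1
  · simp [hx.2, hxt.2]

section

variable {n : ℕ}

theorem gradSq_nonneg (f : En n → ℝ) (x : En n) : 0 ≤ gradSq f x :=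
  Finset.sum_nonneg fun _ _ => sq_nonneg _

theorem hasFDerivAt_gradSq {f : En n → ℝ} {x : En n}
    (hf : ∀ j, DifferentiableAt ℝ (pd f j) x) :
    HasFDerivAt (gradSq f) (∑ j, (2 * pd f j x) • fderiv ℝ (pd f j) x) x :=
  HasFDerivAt.fun_sum fun j _ => by simpa using (hf j).hasFDerivAt.pow 2

theorem fderiv_Fcomp_apply {f : En n → ℝ} {x : En n}
    (hf : ∀ j, DifferentiableAt ℝ (pd f j) x) (i : Fin n) (v : En n) :
    fderiv ℝ (Fcomp f i) x v = fderiv ℝ (pd f i) x v / √(1 + gradSq f x)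
      - pd f i x * (∑ j, pd f j x * fderiv ℝ (pd f j) x v) / √(1 + gradSq f x) ^ 3 := by
  have hq : 0 < 1 + gradSq f x := by linarith [gradSq_nonneg f x]
  have hs : 0 < √(1 + gradSq f x) := Real.sqrt_pos.2 hq
  have hsqrt := ((hasFDerivAt_gradSq hf).const_add 1).sqrt hq.ne'
  have hF : HasFDerivAt (fun y => pd f i y * (√(1 + gradSq f y))⁻¹) _ x :=
    (hf i).hasFDerivAt.mul ((hasDerivAt_inv hs.ne').comp_hasFDerivAt x hsqrt)
  have hFcomp : Fcomp f i = fun y => pd f i y * (√(1 + gradSq f y))⁻¹ := by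
    funext y
    rw [Fcomp, div_eq_mul_inv]
  rw [hFcomp, hF.fderiv]
  simp only [add_apply, smul_apply, sum_apply, smul_eq_mul, mul_assoc, ← Finset.mul_sum]
  field_simp
  ring

theorem divF_eq {f : En n → ℝ} {x : En n} (hf : ∀ j, DifferentiableAt ℝ (pd f j) x) :
    divF f x = (∑ i, pd2 f i i x) / √(1 + gradSq f x)
      - (∑ i, ∑ j, pd2 f i j x * pd f i x * pd f j x) / √(1 + gradSq f x) ^ 3 := by
  simp only [divF, fderiv_Fcomp_apply hf, Finset.sum_sub_distrib, ← Finset.sum_div]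
  congr 2
  refine Finset.sum_congr rfl fun i _ => ?_
  rw [Finset.mul_sum]
  exact Finset.sum_congr rfl fun j _ => by simp only [pd2]; ring

theorem ContDiffAt.differentiableAt_pd {f : En n → ℝ} {x : En n} (hf : ContDiffAt ℝ 2 f x)
    (j : Fin n) : DifferentiableAt ℝ (pd f j) x :=
  ((hf.fderiv_right (m := 1) le_rfl).clm_apply contDiffAt_const).differentiableAt one_ne_zero

theorem ContDiffOn.continuousOn_pd2 {f : En n → ℝ} {Ω : Set (En n)} (hf : ContDiffOn ℝ 2 f Ω)
    (hΩ : IsOpen Ω) (i j : Fin n) : ContinuousOn (pd2 f i j) Ω :=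
  (((hf.fderiv_of_isOpen hΩ (m := 1) le_rfl).clm_apply contDiffOn_const)
    |>.continuousOn_fderiv_of_isOpen hΩ le_rfl).clm_apply continuousOn_const

theorem pd2_sub {f g : En n → ℝ} {x : En n} (hf : ContDiffAt ℝ 2 f x) (hg : ContDiffAt ℝ 2 g x)
    (i j : Fin n) : pd2 (fun y => f y - g y) i j x = pd2 f i j x - pd2 g i j x := by
  have hpd : (fun y => pd (fun y => f y - g y) j y) =ᶠ[𝓝 x] fun y => pd f j y - pd g j y := by
    filter_upwards [hf.eventually (by simp), hg.eventually (by simp)] with y hfy hgy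
    simp only [pd]
    rw [fderiv_fun_sub (hfy.differentiableAt two_ne_zero) (hgy.differentiableAt two_ne_zero)]
    rfl
  simp only [pd2]
  rw [hpd.fderiv_eq, fderiv_fun_sub (hf.differentiableAt_pd j) (hg.differentiableAt_pd j)]
  rfl

theorem pd2_eq_fderiv_fderiv {f : En n → ℝ} {x : En n} (hf : DifferentiableAt ℝ (fderiv ℝ f) x)
    (i j : Fin n) :
    pd2 f i j x = fderiv ℝ (fderiv ℝ f) x (EuclideanSpace.single i 1) (EuclideanSpace.single j 1) :=
  congrArg (· (EuclideanSpace.single i 1))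
    ((ContinuousLinearMap.apply ℝ ℝ (EuclideanSpace.single j 1)).hasFDerivAt.comp x
      hf.hasFDerivAt).fderiv

theorem sum_pd2_mul_mul_eq {f : En n → ℝ} {x : En n} (hf : DifferentiableAt ℝ (fderiv ℝ f) x)
    (ξ : Fin n → ℝ) :
    ∑ i, ∑ j, pd2 f i j x * ξ i * ξ j
      = fderiv ℝ (fderiv ℝ f) x (WithLp.toLp 2 ξ) (WithLp.toLp 2 ξ) := by
  have hξ : WithLp.toLp 2 ξ = ∑ i, ξ i • EuclideanSpace.single i (1 : ℝ) := by
    ext k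
    simp [Pi.single_apply]
  simp only [hξ, map_sum, map_smul, sum_apply, smul_apply, smul_eq_mul, Finset.mul_sum,
    pd2_eq_fderiv_fderiv hf]
  rw [Finset.sum_comm]
  exact Finset.sum_congr rfl fun i _ => Finset.sum_congr rfl fun j _ => by ring

theorem IsLocalMin.sum_pd2_mul_mul_nonneg {w : En n → ℝ} {x : En n} (hmin : IsLocalMin w x)
    (hw : ContDiffAt ℝ 2 w x) (ξ : Fin n → ℝ) : 0 ≤ ∑ i, ∑ j, pd2 w i j x * ξ i * ξ j := by
  rw [sum_pd2_mul_mul_eq ((hw.fderiv_right (m := 1) le_rfl).differentiableAt one_ne_zero)]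
  exact hmin.fderiv_fderiv_apply_nonneg hw _

theorem isLocalMin_sub_of_le {Ω : Set (En n)} (hΩ : IsOpen Ω) {u₁ u₂ : En n → ℝ}
    (hle : ∀ x ∈ Ω, u₁ x ≤ u₂ x) {x : En n} (hx : x ∈ Ω) (heq : u₁ x = u₂ x) :
    IsLocalMin (fun y => u₂ y - u₁ y) x :=
  (hΩ.eventually_mem hx).mono fun y hy => by
    simp only [heq, sub_self, sub_nonneg]
    exact hle y hy

theorem sum_pd2_sub_pos {u₁ u₂ : En n → ℝ} {x : En n} (hu₁ : ContDiffAt ℝ 2 u₁ x)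
    (hu₂ : ContDiffAt ℝ 2 u₂ x) (hgrad : fderiv ℝ u₁ x = fderiv ℝ u₂ x)
    (hdiv : divF u₁ x < divF u₂ x)
    (hpsd : ∀ ξ : Fin n → ℝ, 0 ≤ ∑ i, ∑ j, pd2 (fun y => u₂ y - u₁ y) i j x * ξ i * ξ j) :
    0 < ∑ i, pd2 (fun y => u₂ y - u₁ y) i i x := by
  have hpd : ∀ j, pd u₂ j x = pd u₁ j x := fun j => by simp only [pd, hgrad]
  have hs : 0 < √(1 + gradSq u₁ x) := Real.sqrt_pos.2 (by linarith [gradSq_nonneg u₁ x])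
  have hquad := hpsd fun j => pd u₁ j x
  have hdiff : divF u₂ x - divF u₁ x
      = (∑ i, pd2 (fun y => u₂ y - u₁ y) i i x) / √(1 + gradSq u₁ x)
        - (∑ i, ∑ j, pd2 (fun y => u₂ y - u₁ y) i j x * pd u₁ i x * pd u₁ j x)
          / √(1 + gradSq u₁ x) ^ 3 := by
    rw [divF_eq hu₂.differentiableAt_pd, divF_eq hu₁.differentiableAt_pd]
    simp only [gradSq, hpd, pd2_sub hu₂ hu₁, sub_mul, Finset.sum_sub_distrib]
    ring
  have : 0 < (∑ i, pd2 (fun y => u₂ y - u₁ y) i i x) / √(1 + gradSq u₁ x) := by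
    linarith [div_nonneg hquad (pow_nonneg hs.le 3)]
  exact (div_pos_iff_of_pos_right hs).1 this

end

/-- **Structure at a touching point of two ordered CMC graphs with opposite mean
curvature signs**: at a touching point the gradients agree, the Hessian of `u₂ − u₁` is
positive semidefinite and nonzero with a positive pure second derivative, and near such a
point the contact set lies in the zero set of a partial derivative whose derivative does
not vanish, hence has measure zero. -/
theorem touching_point_structure
    {n : ℕ} (Ω : Set (En n)) (hΩ : IsOpen Ω) (h : ℝ) (hh : 0 < h)
    (u₁ u₂ : En n → ℝ)
    (hu₁ : ContDiffOn ℝ 2 u₁ Ω) (hu₂ : ContDiffOn ℝ 2 u₂ Ω)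
    (hle : ∀ x ∈ Ω, u₁ x ≤ u₂ x)
    (hcmc₁ : ∀ x ∈ Ω, divF u₁ x = -h)
    (hcmc₂ : ∀ x ∈ Ω, divF u₂ x = h)
    (x₀ : En n) (hx₀ : x₀ ∈ Ω) (htouch : u₁ x₀ = u₂ x₀) :
    fderiv ℝ u₁ x₀ = fderiv ℝ u₂ x₀ ∧
    (∀ ξ : Fin n → ℝ,
        0 ≤ ∑ i, ∑ j, pd2 (fun y => u₂ y - u₁ y) i j x₀ * ξ i * ξ j) ∧
    (∃ i j, pd2 (fun y => u₂ y - u₁ y) i j x₀ ≠ 0) ∧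
    (∃ i, 0 < pd2 (fun y => u₂ y - u₁ y) i i x₀) ∧
    (∃ (i : Fin n) (U : Set (En n)), IsOpen U ∧ x₀ ∈ U ∧ U ⊆ Ω ∧
      (∀ x ∈ U, 0 < pd2 (fun y => u₂ y - u₁ y) i i x) ∧
      {x ∈ U | u₁ x = u₂ x} ⊆ {x ∈ U | pd (fun y => u₂ y - u₁ y) i x = 0} ∧
      volume {x ∈ U | u₁ x = u₂ x} = 0) := by
  set w := fun y => u₂ y - u₁ y
  have hw : ContDiffOn ℝ 2 w Ω := hu₂.sub hu₁
  have hC2 {f : En n → ℝ} (hf : ContDiffOn ℝ 2 f Ω) {x} (hx : x ∈ Ω) : ContDiffAt ℝ 2 f x :=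
    hf.contDiffAt (hΩ.mem_nhds hx)
  have hmin₀ := isLocalMin_sub_of_le hΩ hle hx₀ htouch
  have hgrad : fderiv ℝ u₁ x₀ = fderiv ℝ u₂ x₀ := by
    have := hmin₀.fderiv_eq_zero
    rw [fderiv_fun_sub ((hC2 hu₂ hx₀).differentiableAt two_ne_zero)
      ((hC2 hu₁ hx₀).differentiableAt two_ne_zero), sub_eq_zero] at this
    exact this.symm
  have hpsd := hmin₀.sum_pd2_mul_mul_nonneg (hC2 hw hx₀)
  have htrace := sum_pd2_sub_pos (hC2 hu₁ hx₀) (hC2 hu₂ hx₀) hgrad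
    (by linarith [hcmc₁ x₀ hx₀, hcmc₂ x₀ hx₀]) hpsd
  obtain ⟨i, -, hi⟩ := Finset.exists_lt_of_sum_lt (by simpa using htrace : ∑ _i, (0 : ℝ) < _)
  obtain ⟨r, hr, hball⟩ := Metric.isOpen_iff.1
    ((hw.continuousOn_pd2 hΩ i i).isOpen_inter_preimage hΩ isOpen_Ioi) x₀ ⟨hx₀, hi⟩
  have hcontact : {x ∈ ball x₀ r | u₁ x = u₂ x} ⊆ {x ∈ ball x₀ r | pd w i x = 0} :=
    fun x ⟨hx, heq⟩ => ⟨hx, congrArg (· (EuclideanSpace.single i 1))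
      (isLocalMin_sub_of_le hΩ hle (hball hx).1 heq).fderiv_eq_zero⟩
  refine ⟨hgrad, hpsd, ⟨i, i, hi.ne'⟩, ⟨i, hi⟩, i, ball x₀ r, isOpen_ball, mem_ball_self hr,
    fun x hx => (hball hx).1, fun x hx => (hball hx).2, hcontact, measure_mono_null hcontact ?_⟩
  exact (convex_ball x₀ r).volume_sep_eq_zero_of_fderiv_apply_single_pos isOpen_ball i
    (fun y hy => (hC2 hw (hball hy).1).differentiableAt_pd i) fun y hy => (hball hy).2
end
end
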